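/- Suppose F is nondegenerate and k ≤ 2. Then there is an open dense subset U ⊆ ℂ^m such that (a^F)^F ∩ a^F = {0} for every a ∈ U. -/

import Mathlib

open Matrix Complex

/-- The standard Hermitian inner product on `ℂ^m`: `⟪a,b⟫ = ∑ l, a l * conj (b l)`. -/
noncomputable def hermInner {m : ℕ} (a b : Fin m → ℂ) : ℂ :=
  ∑ l, a l * (starRingEnd ℂ) (b l)

/-- The `ℂ^k`-valued Hermitian form `F(z,ζ) = (⟪A₁ z, ζ⟫, …, ⟪A_k z, ζ⟫)`. -/
noncomputable def Fform {m k : ℕ} (A : Fin k → Matrix (Fin m) (Fin m) ℂ)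
    (z ζ : Fin m → ℂ) : Fin k → ℂ :=
  fun j => hermInner ((A j).mulVec z) ζ

/-- The orthogonal complement `S^F` of a set `S ⊆ ℂ^m`. -/
noncomputable def orthF {m k : ℕ} (A : Fin k → Matrix (Fin m) (Fin m) ℂ)
    (S : Set (Fin m → ℂ)) : Set (Fin m → ℂ) :=
  {x | ∀ y ∈ S, Fform A x y = 0}

/-- The subspace `T(a,b) = {y : ∃ x, F(x,b) + F(a,y) = 0}`. -/
noncomputable def Tspace {m k : ℕ} (A : Fin k → Matrix (Fin m) (Fin m) ℂ)
    (a b : Fin m → ℂ) : Set (Fin m → ℂ) :=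
  {y | ∃ x, Fform A x b + Fform A a y = 0}

/-- `F` is nondegenerate: the `A_j` are `ℝ`-linearly independent, and
`F(z,ζ) = 0` for all `z` implies `ζ = 0`. -/
noncomputable def FNondeg {m k : ℕ} (A : Fin k → Matrix (Fin m) (Fin m) ℂ) : Prop :=
  LinearIndependent ℝ A ∧ ∀ ζ : Fin m → ℂ, (∀ z : Fin m → ℂ, Fform A z ζ = 0) → ζ = 0

/-- `F` is T-nondegenerate: for generic `a ∈ ℂ^m`, `T(a)^F = {0}`. -/
noncomputable def TNondeg {m k : ℕ} (A : Fin k → Matrix (Fin m) (Fin m) ℂ) : Prop :=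
  ∃ U : Set (Fin m → ℂ), IsOpen U ∧ Dense U ∧
    ∀ a ∈ U, orthF A (Tspace A a a) = {0}

/-!
For `x ∈ (a^F)^F ∩ a^F` let `W = span {A j a}`. Then `a^F = W^⊥`, so every `A j x` lies in `W`,
while `x ⊥ W`.

With one form, `A 0` is invertible, so `x ∈ ℂ a`, and `⟪A 0 a, a⟫ ≠ 0` forces `x = 0`.

With two forms, look at the real pencil `A 0 + t A 1`. If it is singular for every `t`, pairing
with kernel vectors at `t = 0, 1, -1` again gives `x ∈ ℂ a`. Otherwise some `P = A 0 + t A 1`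
is invertible, and with `C = P⁻¹ A 1` we get `x ∈ span {a, C a}`. The orthogonality conditions
are then a `2 × 2` system whose determinant is the Gram determinant of `⟪P ·, ·⟫` on `a, C a`.
If that determinant vanished identically, the first two Taylor coefficients of its expansion
along lines would make every `a` with `⟪P a, a⟫ ≠ 0` an eigenvector of `C`. Then `C` would be
scalar and `A 1 ∈ ℝ P`, which contradicts linear independence.

Every genericity condition says that some real-analytic function of `a` does not vanish, so it
holds on an open dense set.
-/

open ComplexConjugate Set

section hermInner
variable {m : ℕ}

lemma hermInner_eq_dotProduct (u v : Fin m → ℂ) : hermInner u v = u ⬝ᵥ star v := rfl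

lemma hermInner_eq_inner (u v : Fin m → ℂ) :
    hermInner u v = inner ℂ (WithLp.toLp 2 v : EuclideanSpace ℂ (Fin m)) (WithLp.toLp 2 u) := by
  simp only [hermInner, PiLp.inner_apply, RCLike.inner_apply]

@[simp] lemma hermInner_add_left (u v w : Fin m → ℂ) :
    hermInner (u + v) w = hermInner u w + hermInner v w := by
  simp [hermInner_eq_dotProduct]

@[simp] lemma hermInner_add_right (u v w : Fin m → ℂ) :
    hermInner u (v + w) = hermInner u v + hermInner u w := by
  simp [hermInner_eq_dotProduct]

@[simp] lemma hermInner_sub_left (u v w : Fin m → ℂ) :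
    hermInner (u - v) w = hermInner u w - hermInner v w := by
  simp [hermInner_eq_dotProduct]

@[simp] lemma hermInner_sub_right (u v w : Fin m → ℂ) :
    hermInner u (v - w) = hermInner u v - hermInner u w := by
  simp [hermInner_eq_dotProduct]

@[simp] lemma hermInner_smul_left (c : ℂ) (u v : Fin m → ℂ) :
    hermInner (c • u) v = c * hermInner u v := by
  simp [hermInner_eq_dotProduct]

@[simp] lemma hermInner_smul_right (c : ℂ) (u v : Fin m → ℂ) :
    hermInner u (c • v) = conj c * hermInner u v := by
  simp [hermInner_eq_dotProduct, star_smul]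

@[simp] lemma hermInner_zero_left (v : Fin m → ℂ) : hermInner 0 v = 0 := by
  simp [hermInner_eq_dotProduct]

@[simp] lemma hermInner_zero_right (u : Fin m → ℂ) : hermInner u 0 = 0 := by
  simp [hermInner_eq_dotProduct]

lemma conj_hermInner (u v : Fin m → ℂ) : conj (hermInner u v) = hermInner v u := by
  simp [hermInner, mul_comm]

lemma hermInner_self_eq_zero {v : Fin m → ℂ} : hermInner v v = 0 ↔ v = 0 := by
  rw [hermInner_eq_inner, inner_self_eq_zero, WithLp.toLp_eq_zero]

lemma Matrix.IsHermitian.hermInner_mulVec {N : Matrix (Fin m) (Fin m) ℂ} (hN : N.IsHermitian)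
    (x y : Fin m → ℂ) : hermInner (N *ᵥ x) y = hermInner x (N *ᵥ y) := by
  rw [hermInner_eq_dotProduct, hermInner_eq_dotProduct, star_mulVec, hN.eq, dotProduct_comm,
    dotProduct_mulVec, dotProduct_comm]

lemma hermInner_add_real_smul (x y u v : Fin m → ℂ) (t : ℝ) :
    hermInner (x + (t : ℂ) • y) (u + (t : ℂ) • v) =
      hermInner x u + t * (hermInner x v + hermInner y u) + t ^ 2 * hermInner y v := by
  simp only [hermInner_add_left, hermInner_add_right, hermInner_smul_left, hermInner_smul_right,
    conj_ofReal]
  ring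

lemma exists_hermInner_mulVec_self_ne_zero {N : Matrix (Fin m) (Fin m) ℂ} (hN : N ≠ 0) :
    ∃ a, hermInner (N *ᵥ a) a ≠ 0 := by
  by_contra! h
  refine hN (toEuclideanLin.injective ?_)
  rw [map_zero, ← inner_map_self_eq_zero]
  intro x
  have := congrArg conj (h (WithLp.ofLp x))
  rwa [conj_hermInner, hermInner_eq_inner, map_zero] at this

end hermInner

section analytic
open Filter Topology

variable {E F : Type*} [NormedAddCommGroup E] [NormedSpace ℝ E] [NormedAddCommGroup F]
  [NormedSpace ℝ F]

lemma AnalyticOnNhd.dense_setOf_ne_zero {f : E → F} (hf : AnalyticOnNhd ℝ f univ) {a₀ : E}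
    (h₀ : f a₀ ≠ 0) : Dense {a | f a ≠ 0} := by
  show Dense {a | f a = 0}ᶜ
  rw [← interior_eq_empty_iff_dense_compl, eq_empty_iff_forall_notMem]
  intro x hx
  have hev : f =ᶠ[𝓝 x] 0 := mem_interior_iff_mem_nhds.1 hx
  exact h₀ (hf.eqOn_zero_of_preconnected_of_eventuallyEq_zero isPreconnected_univ (mem_univ x)
    hev (mem_univ a₀))

lemma exists_isOpen_dense_forall_ne_zero [CompleteSpace E] {ι : Type*} [Finite ι]
    {f : ι → E → F} (hf : ∀ i, AnalyticOnNhd ℝ (f i) univ) (h₀ : ∀ i, ∃ a, f i a ≠ 0) :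
    ∃ U : Set E, IsOpen U ∧ Dense U ∧ ∀ a ∈ U, ∀ i, f i a ≠ 0 := by
  have hopen : ∀ i, IsOpen {a | f i a ≠ 0} := fun i =>
    isOpen_ne_fun (hf i).continuous continuous_const
  refine ⟨⋂ i, {a | f i a ≠ 0}, isOpen_iInter_of_finite hopen,
    dense_iInter_of_isOpen hopen fun i => ?_, fun a ha => mem_iInter.1 ha⟩
  obtain ⟨a₀, ha₀⟩ := h₀ i
  exact (hf i).dense_setOf_ne_zero ha₀

lemma AnalyticAt.hermInner {m : ℕ} {f g : E → Fin m → ℂ} {x : E} (hf : AnalyticAt ℝ f x)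
    (hg : AnalyticAt ℝ g x) : AnalyticAt ℝ (fun a => hermInner (f a) (g a)) x :=
  Finset.analyticAt_fun_sum _ fun l _ => (analyticAt_pi_iff.1 hf l).mul
    (conjCLE.toContinuousLinearMap.analyticAt _ |>.comp (analyticAt_pi_iff.1 hg l))

lemma AnalyticAt.mulVec {m : ℕ} {f : E → Fin m → ℂ} {x : E} (hf : AnalyticAt ℝ f x)
    (N : Matrix (Fin m) (Fin m) ℂ) : AnalyticAt ℝ (fun a => N *ᵥ f a) x :=
  (LinearMap.toContinuousLinearMap ((mulVecLin N).restrictScalars ℝ)).analyticAt _ |>.comp hf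

lemma analyticOnNhd_hermInner_mulVec_self {m : ℕ} (N : Matrix (Fin m) (Fin m) ℂ) :
    AnalyticOnNhd ℝ (fun a => hermInner (N *ᵥ a) a) univ := fun _ _ =>
  (analyticAt_id.mulVec N).hermInner analyticAt_id

end analytic

section orthF
variable {m k : ℕ} {A : Fin k → Matrix (Fin m) (Fin m) ℂ}

lemma zero_mem_orthF (S : Set (Fin m → ℂ)) : (0 : Fin m → ℂ) ∈ orthF A S :=
  fun _ _ => funext fun _ => by simp [Fform]

lemma mem_orthF_singleton {a x : Fin m → ℂ} :
    x ∈ orthF A {a} ↔ ∀ j, hermInner (A j *ᵥ x) a = 0 :=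
  ⟨fun h j => congrFun (h a rfl) j, fun h _ hy => hy ▸ funext h⟩

lemma orthF_orthF_inter_orthF_eq_zero_iff {a : Fin m → ℂ} :
    orthF A (orthF A {a}) ∩ orthF A {a} = {0} ↔
      ∀ x ∈ orthF A (orthF A {a}), x ∈ orthF A {a} → x = 0 := by
  rw [Set.eq_singleton_iff_unique_mem]
  exact ⟨fun h x hx hx' => h.2 x ⟨hx, hx'⟩, fun h => ⟨⟨zero_mem_orthF _, zero_mem_orthF _⟩,
    fun x hx => h x hx.1 hx.2⟩⟩

lemma FNondeg.eq_zero_of_forall_mulVec_eq_zero (hnd : FNondeg A)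
    (hA : ∀ j, (A j).IsHermitian) {ζ : Fin m → ℂ} (hζ : ∀ j, A j *ᵥ ζ = 0) : ζ = 0 :=
  hnd.2 ζ fun z => funext fun j => by simp [Fform, (hA j).hermInner_mulVec, hζ]

/-- `a^F` is the orthogonal complement of `W = span {A i a}`, so this is `W^⊥⊥ = W`. -/
lemma exists_mulVec_eq_sum_of_mem_orthF_orthF (hA : ∀ j, (A j).IsHermitian)
    {a x : Fin m → ℂ} (hx : x ∈ orthF A (orthF A {a})) (j : Fin k) :
    ∃ c : Fin k → ℂ, A j *ᵥ x = ∑ i, c i • A i *ᵥ a := by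
  let W : Submodule ℂ (EuclideanSpace ℂ (Fin m)) :=
    Submodule.span ℂ (Set.range fun i => WithLp.toLp 2 (A i *ᵥ a))
  have hW : ∀ y, WithLp.toLp 2 y ∈ Wᗮ ↔ y ∈ orthF A {a} := by
    intro y
    simp only [W, Submodule.span_range_eq_iSup, ← Submodule.iInf_orthogonal, Submodule.mem_iInf,
      Submodule.mem_orthogonal_singleton_iff_inner_right, ← hermInner_eq_inner,
      mem_orthF_singleton, (hA _).hermInner_mulVec]
  have hjx : WithLp.toLp 2 (A j *ᵥ x) ∈ W := by
    rw [← W.orthogonal_orthogonal, Submodule.mem_orthogonal]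
    intro u hu
    rw [← WithLp.toLp_ofLp (p := 2) u, ← hermInner_eq_inner]
    exact congrFun (hx _ ((hW _).1 hu)) j
  obtain ⟨c, hc⟩ := (Submodule.mem_span_range_iff_exists_fun ℂ).1 hjx
  exact ⟨c, by simpa [WithLp.ofLp_sum] using (congrArg WithLp.ofLp hc).symm⟩

lemma eq_zero_of_eq_smul_of_mem_orthF {a x : Fin m → ℂ} (hx : x ∈ orthF A {a}) {c : ℂ}
    (hxa : x = c • a) {j : Fin k} (ha : hermInner (A j *ᵥ a) a ≠ 0) : x = 0 := by
  have h := mem_orthF_singleton.1 hx j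
  rw [hxa, mulVec_smul, hermInner_smul_left] at h
  rw [hxa, (mul_eq_zero.1 h).resolve_right ha, zero_smul]

end orthF

section oneForm
variable {m : ℕ}

lemma exists_isOpen_dense_of_fin_one {A : Fin 1 → Matrix (Fin m) (Fin m) ℂ}
    (hA : ∀ j, (A j).IsHermitian) (hnd : FNondeg A) :
    ∃ U : Set (Fin m → ℂ), IsOpen U ∧ Dense U ∧
      ∀ a ∈ U, orthF A (orthF A {a}) ∩ orthF A {a} = {0} := by
  obtain ⟨a₀, ha₀⟩ := exists_hermInner_mulVec_self_ne_zero (hnd.1.ne_zero 0)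
  have hq := analyticOnNhd_hermInner_mulVec_self (A 0)
  refine ⟨_, isOpen_ne_fun hq.continuous continuous_const, hq.dense_setOf_ne_zero ha₀,
    fun a ha => orthF_orthF_inter_orthF_eq_zero_iff.2 fun x hx hx' => ?_⟩
  obtain ⟨c, hc⟩ := exists_mulVec_eq_sum_of_mem_orthF_orthF hA hx 0
  refine eq_zero_of_eq_smul_of_mem_orthF hx' (c := c 0) (sub_eq_zero.1
    (hnd.eq_zero_of_forall_mulVec_eq_zero hA (Fin.forall_fin_one.2 ?_))) ha
  simp [mulVec_sub, mulVec_smul, hc]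

end oneForm

section singularPencil
variable {m : ℕ}

lemma hermInner_mulVec_eq_of_mulVec_eq_zero {P Q : Matrix (Fin m) (Fin m) ℂ}
    (hP : P.IsHermitian) (hQ : Q.IsHermitian) {t : ℝ} {n : Fin m → ℂ}
    (hn : (P + (t : ℂ) • Q) *ᵥ n = 0) (y : Fin m → ℂ) :
    hermInner (P *ᵥ y) n = -t * hermInner (Q *ᵥ y) n := by
  have h : hermInner y ((P + (t : ℂ) • Q) *ᵥ n) = 0 := by rw [hn, hermInner_zero_right]
  rw [add_mulVec, smul_mulVec, hermInner_add_right, hermInner_smul_right, conj_ofReal,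
    ← hP.hermInner_mulVec, ← hQ.hermInner_mulVec] at h
  linear_combination h

lemma exists_isOpen_dense_of_forall_det_eq_zero {A : Fin 2 → Matrix (Fin m) (Fin m) ℂ}
    (hA : ∀ j, (A j).IsHermitian) (hnd : FNondeg A)
    (hsing : ∀ t : ℝ, (A 0 + (t : ℂ) • A 1).det = 0) :
    ∃ U : Set (Fin m → ℂ), IsOpen U ∧ Dense U ∧
      ∀ a ∈ U, orthF A (orthF A {a}) ∩ orthF A {a} = {0} := by
  have hker : ∀ t : ℝ, ∃ n, (A 0 + (t : ℂ) • A 1) *ᵥ n = 0 ∧ ∃ b, hermInner (A 1 *ᵥ b) n ≠ 0 := by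
    intro t
    obtain ⟨n, hn0, hn⟩ := exists_mulVec_eq_zero_iff.2 (hsing t)
    refine ⟨n, hn, A 1 *ᵥ n, fun h => hn0 (hnd.eq_zero_of_forall_mulVec_eq_zero hA ?_)⟩
    rw [(hA 1).hermInner_mulVec, hermInner_self_eq_zero] at h
    exact Fin.forall_fin_two.2 ⟨by simpa [add_mulVec, smul_mulVec, h] using hn, h⟩
  choose n hn hb using hker
  let τ : Fin 3 → ℝ := ![0, 1, -1]
  obtain ⟨U, hUo, hUd, hU⟩ := exists_isOpen_dense_forall_ne_zero
    (f := fun i a => hermInner (A 1 *ᵥ a) (n (τ i)))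
    (fun _ _ _ => (analyticAt_id.mulVec _).hermInner analyticAt_const) (fun i => hb (τ i))
  obtain ⟨a₀, ha₀⟩ := exists_hermInner_mulVec_self_ne_zero (hnd.1.ne_zero 0)
  have hq := analyticOnNhd_hermInner_mulVec_self (A 0)
  refine ⟨U ∩ {a | hermInner (A 0 *ᵥ a) a ≠ 0},
    hUo.inter (isOpen_ne_fun hq.continuous continuous_const),
    hUd.inter_of_isOpen_left (hq.dense_setOf_ne_zero ha₀) hUo,
    fun a ha => orthF_orthF_inter_orthF_eq_zero_iff.2 fun x hx hx' => ?_⟩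
  obtain ⟨c, hc⟩ := exists_mulVec_eq_sum_of_mem_orthF_orthF hA hx 0
  obtain ⟨d, hd⟩ := exists_mulVec_eq_sum_of_mem_orthF_orthF hA hx 1
  rw [Fin.sum_univ_two] at hc hd
  have hcoeff : ∀ i, c 1 + τ i * (d 1 - c 0) - τ i ^ 2 * d 0 = 0 := by
    intro i
    have hnx := hermInner_mulVec_eq_of_mulVec_eq_zero (hA 0) (hA 1) (hn (τ i)) x
    have hna := hermInner_mulVec_eq_of_mulVec_eq_zero (hA 0) (hA 1) (hn (τ i)) a
    simp only [hc, hd, hermInner_add_left, hermInner_smul_left] at hnx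
    refine (mul_eq_zero.1 ?_).resolve_right (hU a ha.1 i)
    linear_combination hnx - (c 0 + τ i * d 0) * hna
  have h₀ := hcoeff 0
  have h₁ := hcoeff 1
  have h₂ := hcoeff 2
  simp only [τ, Matrix.cons_val] at h₀ h₁ h₂
  push_cast at h₀ h₁ h₂
  have hc₁ : c 1 = 0 := by linear_combination h₀
  have hd₀ : d 0 = 0 := by linear_combination h₀ - (h₁ + h₂) / 2
  have hd₁ : d 1 = c 0 := by linear_combination (h₁ - h₂) / 2
  refine eq_zero_of_eq_smul_of_mem_orthF hx' (c := c 0) (sub_eq_zero.1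
    (hnd.eq_zero_of_forall_mulVec_eq_zero hA (Fin.forall_fin_two.2 ⟨?_, ?_⟩))) ha.2
  · simp [mulVec_sub, mulVec_smul, hc, hc₁]
  · simp [mulVec_sub, mulVec_smul, hd, hd₀, hd₁]

end singularPencil

lemma eq_zero_of_sq_eq_of_two_mul_sq_eq {z z' : ℂ} (h₁ : (z + z') ^ 2 = (I * z' - I * z) ^ 2)
    (h₂ : 2 * (z + z') ^ 2 = ((1 - I) * z + (1 + I) * z') ^ 2) : z = 0 := by
  have hsum : z ^ 2 + z' ^ 2 = 0 := by
    linear_combination h₁ / 2 + (z' - z) ^ 2 / 2 * I_sq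
  have hdiff : z ^ 2 - z' ^ 2 = 0 := by
    linear_combination (norm := ring_nf) (-I / 2) * h₂ + I * hsum
    simp only [I_sq, I_pow_three]
    ring
  exact pow_eq_zero_iff two_ne_zero |>.1 (by linear_combination (hsum + hdiff) / 2)

lemma coeff_one_two_eq_zero_of_forall_eq_zero {α p q r e s w : ℂ}
    (h : ∀ t : ℝ, (α + t * p + t ^ 2 * q) * (t * s + t ^ 2 * w) - (t * r + t ^ 2 * e) ^ 2 = 0) :
    α * s = 0 ∧ α * w + p * s - r ^ 2 = 0 := by
  have h₁ := h 1
  have h₂ := h (-1)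
  have h₃ := h 2
  have h₄ := h (-2)
  push_cast at h₁ h₂ h₃ h₄
  exact ⟨by linear_combination (2 / 3 : ℂ) * (h₁ - h₂) - (1 / 12 : ℂ) * (h₃ - h₄),
    by linear_combination (2 / 3 : ℂ) * (h₁ + h₂) - (1 / 24 : ℂ) * (h₃ + h₄)⟩

section gramDet
variable {m : ℕ} {P C : Matrix (Fin m) (Fin m) ℂ}

noncomputable def gramDet (P C : Matrix (Fin m) (Fin m) ℂ) (a : Fin m → ℂ) : ℂ :=
  hermInner (P *ᵥ a) a * hermInner (P *ᵥ (C *ᵥ a)) (C *ᵥ a) - hermInner (P *ᵥ (C *ᵥ a)) a ^ 2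

lemma analyticOnNhd_gramDet (P C : Matrix (Fin m) (Fin m) ℂ) :
    AnalyticOnNhd ℝ (gramDet P C) univ := fun _ _ =>
  (((analyticAt_id.mulVec P).hermInner analyticAt_id).mul
    (((analyticAt_id.mulVec C).mulVec P).hermInner (analyticAt_id.mulVec C))).sub
    ((((analyticAt_id.mulVec C).mulVec P).hermInner analyticAt_id).pow 2)

lemma gramDet_sub_smul_one
    (hPC : ∀ x y, hermInner (P *ᵥ (C *ᵥ x)) y = hermInner (P *ᵥ x) (C *ᵥ y)) (μ : ℝ)
    (y : Fin m → ℂ) : gramDet P (C - (μ : ℂ) • 1) y = gramDet P C y := by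
  have hsymm : hermInner (P *ᵥ y) (C *ᵥ y) = hermInner (P *ᵥ (C *ᵥ y)) y := (hPC y y).symm
  simp only [gramDet, sub_mulVec, smul_mulVec, one_mulVec, mulVec_sub, mulVec_smul,
    hermInner_sub_left, hermInner_sub_right, hermInner_smul_left, hermInner_smul_right,
    conj_ofReal, hsymm]
  ring

/- The `t` and `t²` coefficients of `gramDet P C (a + t b)` force `⟪P (C a), b⟫ = 0` for every
`b`, once `b` is replaced by `I • b` and `(1 + I) • b`. -/
lemma mulVec_eq_zero_of_gramDet_eq_zero (hPinj : ∀ x, P *ᵥ x = 0 → x = 0)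
    (hPC : ∀ x y, hermInner (P *ᵥ (C *ᵥ x)) y = hermInner (P *ᵥ x) (C *ᵥ y))
    (hD : ∀ y, gramDet P C y = 0) {a : Fin m → ℂ} (ha : hermInner (P *ᵥ a) a ≠ 0)
    (hCa : hermInner (P *ᵥ (C *ᵥ a)) a = 0) : C *ᵥ a = 0 := by
  have hCaCa : hermInner (P *ᵥ (C *ᵥ a)) (C *ᵥ a) = 0 := by
    have h := hD a
    rw [gramDet, hCa] at h
    exact (mul_eq_zero.1 (by linear_combination h)).resolve_left ha
  have hsecond : ∀ b, hermInner (P *ᵥ a) a * hermInner (P *ᵥ (C *ᵥ b)) (C *ᵥ b) =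
      (hermInner (P *ᵥ (C *ᵥ a)) b + hermInner (P *ᵥ b) (C *ᵥ a)) ^ 2 := by
    intro b
    obtain ⟨h₁, h₂⟩ := coeff_one_two_eq_zero_of_forall_eq_zero (α := hermInner (P *ᵥ a) a)
      (p := hermInner (P *ᵥ a) b + hermInner (P *ᵥ b) a) (q := hermInner (P *ᵥ b) b)
      (r := hermInner (P *ᵥ (C *ᵥ a)) b + hermInner (P *ᵥ (C *ᵥ b)) a)
      (e := hermInner (P *ᵥ (C *ᵥ b)) b)
      (s := hermInner (P *ᵥ (C *ᵥ a)) (C *ᵥ b) + hermInner (P *ᵥ (C *ᵥ b)) (C *ᵥ a))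
      (w := hermInner (P *ᵥ (C *ᵥ b)) (C *ᵥ b)) fun t => by
        have h := hD (a + (t : ℂ) • b)
        simp only [gramDet, mulVec_add, mulVec_smul, hermInner_add_real_smul, hCa, hCaCa] at h
        linear_combination h
    have hs := (mul_eq_zero.1 h₁).resolve_left ha
    rw [hPC b a] at h₂
    linear_combination h₂ - (hermInner (P *ᵥ a) b + hermInner (P *ᵥ b) a) * hs
  have hzero : ∀ b, hermInner (P *ᵥ (C *ᵥ a)) b = 0 := by
    intro b
    have h₁ := hsecond b
    have h₂ := hsecond (I • b)
    have h₃ := hsecond ((1 + I) • b)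
    simp only [mulVec_smul, hermInner_smul_left, hermInner_smul_right, map_add, map_one,
      conj_I] at h₂ h₃
    refine eq_zero_of_sq_eq_of_two_mul_sq_eq (z' := hermInner (P *ᵥ b) (C *ᵥ a)) ?_ ?_
    · linear_combination h₂ - h₁ +
        hermInner (P *ᵥ a) a * hermInner (P *ᵥ (C *ᵥ b)) (C *ᵥ b) * I_sq
    · linear_combination h₃ - 2 * h₁ +
        hermInner (P *ᵥ a) a * hermInner (P *ᵥ (C *ᵥ b)) (C *ᵥ b) * I_sq
  exact hPinj _ (hermInner_self_eq_zero.1 (hzero _))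

lemma exists_mulVec_eq_smul_of_gramDet_eq_zero (hP : P.IsHermitian)
    (hPinj : ∀ x, P *ᵥ x = 0 → x = 0)
    (hPC : ∀ x y, hermInner (P *ᵥ (C *ᵥ x)) y = hermInner (P *ᵥ x) (C *ᵥ y))
    (hD : ∀ y, gramDet P C y = 0) {a : Fin m → ℂ} (ha : hermInner (P *ᵥ a) a ≠ 0) :
    ∃ μ : ℂ, C *ᵥ a = μ • a := by
  set μ := hermInner (P *ᵥ (C *ᵥ a)) a / hermInner (P *ᵥ a) a with hμ
  have hα : conj (hermInner (P *ᵥ a) a) = hermInner (P *ᵥ a) a := by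
    rw [conj_hermInner, hP.hermInner_mulVec]
  have hβ : conj (hermInner (P *ᵥ (C *ᵥ a)) a) = hermInner (P *ᵥ (C *ᵥ a)) a := by
    rw [conj_hermInner, ← hP.hermInner_mulVec, ← hPC]
  have hμ_re : ((μ.re : ℝ) : ℂ) = μ := conj_eq_iff_re.1 (by rw [hμ, map_div₀, hα, hβ])
  -- `μ` is real, so `C - μ` is still self-adjoint for `⟪P ·, ·⟫` and has the same `gramDet`.
  have hC'a : (C - (μ.re : ℂ) • 1) *ᵥ a = 0 := by
    refine mulVec_eq_zero_of_gramDet_eq_zero hPinj (fun x y => ?_)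
      (fun y => (gramDet_sub_smul_one hPC _ y).trans (hD y)) ha ?_
    · simp only [sub_mulVec, smul_mulVec, one_mulVec, mulVec_sub, mulVec_smul, hermInner_sub_left,
        hermInner_sub_right, hermInner_smul_left, hermInner_smul_right, conj_ofReal, hPC]
    · simp only [sub_mulVec, smul_mulVec, one_mulVec, mulVec_sub, mulVec_smul, hermInner_sub_left,
        hermInner_smul_left]
      rw [hμ_re, hμ, div_mul_cancel₀ _ ha, sub_self]
  refine ⟨μ, ?_⟩
  rwa [sub_mulVec, smul_mulVec, one_mulVec, hμ_re, sub_eq_zero] at hC'a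

/- Every `a` off the nowhere dense set `⟪P a, a⟫ = 0` is an eigenvector of `C`; since being
linearly dependent on `C a` is a closed condition on `a`, every `a` is. -/
lemma exists_eq_smul_one_of_gramDet_eq_zero (hP : P.IsHermitian) (hP0 : P ≠ 0)
    (hPinj : ∀ x, P *ᵥ x = 0 → x = 0)
    (hPC : ∀ x y, hermInner (P *ᵥ (C *ᵥ x)) y = hermInner (P *ᵥ x) (C *ᵥ y))
    (hD : ∀ y, gramDet P C y = 0) : ∃ c : ℂ, C = c • 1 := by
  obtain ⟨a₀, ha₀⟩ := exists_hermInner_mulVec_self_ne_zero hP0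
  have hdense := (analyticOnNhd_hermInner_mulVec_self P).dense_setOf_ne_zero ha₀
  have hclosed : IsClosed {v | ¬ LinearIndependent ℂ ![v, C *ᵥ v]} :=
    (isOpen_setOfPred_linearIndependent.preimage (by fun_prop)).isClosed_compl
  have hdep : ∀ v, ¬ LinearIndependent ℂ ![v, toLin' C v] := by
    intro v
    refine hclosed.closure_subset_iff.2 (fun a ha => ?_) (hdense.closure_eq ▸ mem_univ v)
    obtain ⟨μ, hμ⟩ := exists_mulVec_eq_smul_of_gramDet_eq_zero hP hPinj hPC hD ha
    exact fun h => by simpa using (LinearIndependent.pair_iff.1 h μ (-1) (by simp [hμ])).2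
  obtain ⟨c, hc⟩ := LinearMap.exists_eq_smul_id_of_forall_notLinearIndependent hdep
  exact ⟨c, toLin'.injective (by rw [hc, map_smul, toLin'_one]; rfl)⟩

end gramDet

section regularPencil
variable {m : ℕ}

lemma exists_isOpen_dense_of_isUnit_det {P Q : Matrix (Fin m) (Fin m) ℂ} (hP : P.IsHermitian)
    (hQ : Q.IsHermitian) (hPdet : IsUnit P.det) (hPQ : LinearIndependent ℝ ![P, Q]) :
    ∃ U : Set (Fin m → ℂ), IsOpen U ∧ Dense U ∧
      ∀ a ∈ U, orthF ![P, Q] (orthF ![P, Q] {a}) ∩ orthF ![P, Q] {a} = {0} := by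
  set C := P⁻¹ * Q
  have hPC_eq : ∀ x, P *ᵥ (C *ᵥ x) = Q *ᵥ x := fun x => by
    rw [mulVec_mulVec, mul_nonsing_inv_cancel_left _ _ hPdet]
  have hPinj : ∀ x, P *ᵥ x = 0 → x = 0 := fun x hx => by
    simpa [mulVec_mulVec, nonsing_inv_mul _ hPdet] using congrArg (P⁻¹ *ᵥ ·) hx
  have hPC : ∀ x y, hermInner (P *ᵥ (C *ᵥ x)) y = hermInner (P *ᵥ x) (C *ᵥ y) := fun x y => by
    rw [hPC_eq, hQ.hermInner_mulVec, ← hPC_eq, ← hP.hermInner_mulVec]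
  have hD : ∃ a, gramDet P C a ≠ 0 := by
    by_contra! hD
    have hP0 : P ≠ 0 := hPQ.ne_zero 0
    obtain ⟨c, hc⟩ := exists_eq_smul_one_of_gramDet_eq_zero hP hP0 hPinj hPC hD
    have hQc : Q = c • P := calc
      Q = P * C := (mul_nonsing_inv_cancel_left P Q hPdet).symm
      _ = c • P := by rw [hc, Matrix.mul_smul, Matrix.mul_one]
    have hc_real : conj c = c := by
      have h := hQ.eq
      rw [hQc, conjTranspose_smul, hP.eq, ← sub_eq_zero, ← sub_smul, smul_eq_zero] at h
      exact sub_eq_zero.1 (h.resolve_right hP0)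
    have h := LinearIndependent.pair_iff.1 hPQ c.re (-1) (by
      rw [hQc, ← conj_eq_iff_re.1 hc_real, Complex.coe_smul]; simp)
    norm_num at h
  obtain ⟨a₀, ha₀⟩ := hD
  have hDan := analyticOnNhd_gramDet P C
  refine ⟨_, isOpen_ne_fun hDan.continuous continuous_const, hDan.dense_setOf_ne_zero ha₀,
    fun a ha => orthF_orthF_inter_orthF_eq_zero_iff.2 fun x hx hx' => ?_⟩
  obtain ⟨c, hc⟩ := exists_mulVec_eq_sum_of_mem_orthF_orthF (Fin.forall_fin_two.2 ⟨hP, hQ⟩) hx 0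
  have hx_eq : x = c 0 • a + c 1 • C *ᵥ a := by
    refine sub_eq_zero.1 (hPinj _ ?_)
    simpa [Fin.sum_univ_two, mulVec_sub, mulVec_add, mulVec_smul, hPC_eq, sub_eq_zero] using hc
  have h₀ := mem_orthF_singleton.1 hx' 0
  have h₁ := mem_orthF_singleton.1 hx' 1
  simp only [Matrix.cons_val_zero, Matrix.cons_val_one, ← hPC_eq, hx_eq, mulVec_add,
    mulVec_smul, hermInner_add_left, hermInner_smul_left, hPC (C *ᵥ a) a] at h₀ h₁
  have hc₀ : c 0 * gramDet P C a = 0 := by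
    rw [gramDet]
    linear_combination hermInner (P *ᵥ (C *ᵥ a)) (C *ᵥ a) * h₀ - hermInner (P *ᵥ (C *ᵥ a)) a * h₁
  have hc₁ : c 1 * gramDet P C a = 0 := by
    rw [gramDet]
    linear_combination hermInner (P *ᵥ a) a * h₁ - hermInner (P *ᵥ (C *ᵥ a)) a * h₀
  rw [hx_eq, (mul_eq_zero.1 hc₀).resolve_right ha, (mul_eq_zero.1 hc₁).resolve_right ha]
  simp

end regularPencil

section pencil
variable {m : ℕ} (A : Fin 2 → Matrix (Fin m) (Fin m) ℂ)

lemma Fform_pencil_eq_zero_iff (t : ℂ) (x y : Fin m → ℂ) :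
    Fform ![A 0 + t • A 1, A 1] x y = 0 ↔ Fform A x y = 0 := by
  simp only [Fform, funext_iff, Fin.forall_fin_two, Pi.zero_apply, Matrix.cons_val_zero,
    Matrix.cons_val_one, add_mulVec, smul_mulVec, hermInner_add_left, hermInner_smul_left]
  constructor <;> rintro ⟨h₀, h₁⟩ <;> exact ⟨by simpa [h₁] using h₀, h₁⟩

lemma orthF_pencil (t : ℂ) : orthF ![A 0 + t • A 1, A 1] = orthF A := by
  ext S x
  simp only [orthF, Set.mem_ofPred_eq, Fform_pencil_eq_zero_iff]

lemma LinearIndependent.pencil (hA : LinearIndependent ℝ A) (t : ℝ) :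
    LinearIndependent ℝ ![A 0 + (t : ℂ) • A 1, A 1] := by
  refine LinearIndependent.pair_iff.2 fun s u h => ?_
  rw [Complex.coe_smul] at h
  have h' := Fintype.linearIndependent_iff.1 hA ![s, s * t + u] (by
    rw [Fin.sum_univ_two, ← h]
    simp only [Matrix.cons_val_zero, Matrix.cons_val_one]
    module)
  have hs : s = 0 := by simpa using h' 0
  exact ⟨hs, by simpa [hs] using h' 1⟩

end pencil

theorem stmt14_general {m k : ℕ} (hk : 0 < k) (hk2 : k ≤ 2)
    (A : Fin k → Matrix (Fin m) (Fin m) ℂ) (hHerm : ∀ j, (A j).IsHermitian)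
    (hnd : FNondeg A) :
    ∃ U : Set (Fin m → ℂ), IsOpen U ∧ Dense U ∧
      ∀ a ∈ U, orthF A (orthF A {a}) ∩ orthF A {a} = {0} := by
  obtain rfl | rfl : k = 1 ∨ k = 2 := by omega
  · exact exists_isOpen_dense_of_fin_one hHerm hnd
  by_cases hsing : ∀ t : ℝ, (A 0 + (t : ℂ) • A 1).det = 0
  · exact exists_isOpen_dense_of_forall_det_eq_zero hHerm hnd hsing
  obtain ⟨t, ht⟩ := not_forall.1 hsing
  rw [← orthF_pencil A t]
  exact exists_isOpen_dense_of_isUnit_det ((hHerm 0).add ((hHerm 1).smul (conj_ofReal t)))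
    (hHerm 1) (isUnit_iff_ne_zero.2 ht) (hnd.1.pencil A t)

theorem stmt14 {m k : ℕ} (hm : 0 < m) (hk : 0 < k) (hk2 : k ≤ 2)
    (A : Fin k → Matrix (Fin m) (Fin m) ℂ) (hHerm : ∀ j, (A j).IsHermitian)
    (hnd : FNondeg A) :
    ∃ U : Set (Fin m → ℂ), IsOpen U ∧ Dense U ∧
      ∀ a ∈ U, orthF A (orthF A {a}) ∩ orthF A {a} = {0} :=
  stmt14_general hk hk2 A hHerm hnd
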